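/- arXiv:2306.03862 — 3 statements merged into one kernel-verified Lean document; each statement's English description precedes it below -/
import Mathlib

section
/- Let n ≥ 1, λ₁,…,λₙ be nonzero reals, β₁,…,βₙ pairwise distinct nonzero reals, and I a nondegenerate interval with I ≠ ℝ. If V ⊆ ℝ∖I is a Lebesgue nonmeasurable set with inner measure 0, then the function x ↦ (Σᵢ λᵢ e^{βᵢ x}) · χ_{V∪I}(x) is Lebesgue nonmeasurable. -/
/-!
Off the null zero set `Z` of the exponential sum `g`, the function `(V ∪ I).indicator g` vanishes
exactly outside `V ∪ I`. Cutting away the measurable set `I`, an a.e.-measurable version of it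
would make `V \ Z`, hence `V`, null measurable. The set `Z` is null because `g` is real analytic
and not identically zero: the term with the largest frequency dominates at `+∞`.
-/

open MeasureTheory Filter Topology

namespace MeasureTheory

variable {α β : Type*} [MeasurableSpace α] [MeasurableSpace β] {μ : Measure α}
  [Zero β] {f g : α → β} {s t : Set α}

theorem AEMeasurable.indicator_of_union (h : AEMeasurable ((s ∪ t).indicator f) μ)
    (ht : MeasurableSet t) (hst : s ⊆ tᶜ) : AEMeasurable (s.indicator f) μ := by
  have hs : tᶜ ∩ (s ∪ t) = s := by
    rw [Set.inter_union_distrib_left, Set.compl_inter_self, Set.union_empty,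
      Set.inter_eq_right.mpr hst]
  simpa only [Set.indicator_indicator, hs] using h.indicator ht.compl

theorem NullMeasurableSet.of_aemeasurable_indicator [MeasurableSingletonClass β]
    (hg : ∀ᵐ x ∂μ, g x ≠ 0) (h : AEMeasurable (s.indicator g) μ) : NullMeasurableSet s μ := by
  have hsupp : {x | s.indicator g x ≠ 0} = s ∩ {x | g x ≠ 0} := by
    ext x
    by_cases hx : x ∈ s <;> simp [hx]
  have hnull : NullMeasurableSet (s ∩ {x | g x ≠ 0}) μ :=
    hsupp ▸ h.nullMeasurable (measurableSet_singleton 0).compl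
  exact hnull.congr (inter_ae_eq_left_of_ae_eq_univ (eventuallyEq_univ.mpr hg))

end MeasureTheory

theorem AnalyticOnNhd.ae_ne_zero {𝕜 E : Type*} [NontriviallyNormedField 𝕜]
    [NormedAddCommGroup E] [NormedSpace 𝕜 E] [PreconnectedSpace 𝕜] [MeasurableSpace 𝕜]
    [SecondCountableTopology 𝕜] {μ : Measure 𝕜} [NullSingletonClass μ] {f : 𝕜 → E} (hf : AnalyticOnNhd 𝕜 f Set.univ) (hne : ∃ x, f x ≠ 0) :
    ∀ᵐ x ∂μ, f x ≠ 0 := by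
  obtain ⟨x, hx⟩ := hne
  have hcod := (hf.eqOn_zero_or_eventually_ne_zero_of_preconnected isPreconnected_univ).resolve_left
    fun h => hx (h (Set.mem_univ x))
  rw [← Measure.restrict_univ (μ := μ)]
  exact ae_restrict_le_codiscreteWithin .univ hcod

section ExpSum

variable {ι : Type*} [Fintype ι]

noncomputable def expSum (l b : ι → ℝ) (x : ℝ) : ℝ :=
  ∑ i, l i * Real.exp (b i * x)

theorem analyticOnNhd_expSum (l b : ι → ℝ) : AnalyticOnNhd ℝ (expSum l b) Set.univ := by
  intro x _
  unfold expSum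
  fun_prop

theorem tendsto_expSum_shift_atTop (l b : ι → ℝ) {i₀ : ι} (hmax : ∀ i ≠ i₀, b i < b i₀) :
    Tendsto (fun x => ∑ i, l i * Real.exp ((b i - b i₀) * x)) atTop (𝓝 (l i₀)) := by
  classical
  have hterm : ∀ i, Tendsto (fun x => l i * Real.exp ((b i - b i₀) * x)) atTop
      (𝓝 (if i = i₀ then l i else 0)) := by
    intro i
    split_ifs with hi
    · subst hi
      simp
    · have hneg : b i - b i₀ < 0 := sub_neg.mpr (hmax i hi)
      simpa using (Real.tendsto_exp_atBot.comp
        (tendsto_id.const_mul_atTop_of_neg hneg)).const_mul (l i)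
  simpa using tendsto_finsetSum Finset.univ fun i _ => hterm i

theorem exists_expSum_ne_zero [Nonempty ι] {l b : ι → ℝ} (hl : ∀ i, l i ≠ 0)
    (hb : Function.Injective b) : ∃ x, expSum l b x ≠ 0 := by
  obtain ⟨i₀, hi₀⟩ := Finite.exists_max b
  by_contra! h
  have hmax : ∀ i ≠ i₀, b i < b i₀ := fun i hi => (hi₀ i).lt_of_ne (hb.ne hi)
  have hshift : ∀ x, ∑ i, l i * Real.exp ((b i - b i₀) * x)
      = Real.exp (-(b i₀ * x)) * expSum l b x := by
    intro x
    rw [expSum, Finset.mul_sum]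
    refine Finset.sum_congr rfl fun i _ => ?_
    rw [show (b i - b i₀) * x = b i * x + -(b i₀ * x) by ring, Real.exp_add]
    ring
  have hlim := tendsto_expSum_shift_atTop l b hmax
  simp only [hshift, h, mul_zero] at hlim
  exact hl i₀ (tendsto_nhds_unique hlim tendsto_const_nhds)

end ExpSum

theorem stmt_6_general (n : ℕ) (hn : 1 ≤ n) (l : Fin n → ℝ) (hl : ∀ i, l i ≠ 0)
    (b : Fin n → ℝ) (hbinj : Function.Injective b)
    (I : Set ℝ) (hI : I.OrdConnected)
    (V : Set ℝ) (hVI : V ⊆ Iᶜ)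
    (hVnm : ¬ NullMeasurableSet V (volume : Measure ℝ)) :
    ¬ AEMeasurable
      (Set.indicator (V ∪ I) (fun x => ∑ i, l i * Real.exp (b i * x)))
      (volume : Measure ℝ) := by
  intro h
  have : Nonempty (Fin n) := ⟨⟨0, hn⟩⟩
  have hg : ∀ᵐ x, expSum l b x ≠ 0 :=
    (analyticOnNhd_expSum l b).ae_ne_zero (exists_expSum_ne_zero hl hbinj)
  exact hVnm (.of_aemeasurable_indicator hg (h.indicator_of_union hI.measurableSet hVI))

/-- If `V ⊆ ℝ ∖ I` is nonmeasurable with inner measure `0` and `I` is a nondegenerate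
interval different from `ℝ`, then `x ↦ (∑ᵢ λᵢ e^{βᵢ x}) · χ_{V ∪ I}(x)` is
Lebesgue nonmeasurable. -/
theorem stmt_6 (n : ℕ) (hn : 1 ≤ n) (l : Fin n → ℝ) (hl : ∀ i, l i ≠ 0)
    (b : Fin n → ℝ) (hb0 : ∀ i, b i ≠ 0) (hbinj : Function.Injective b)
    (I : Set ℝ) (hI : I.OrdConnected) (hnd : ∃ p ∈ I, ∃ q ∈ I, p < q)
    (hIne : I ≠ Set.univ)
    (V : Set ℝ) (hVI : V ⊆ Iᶜ)
    (hVnm : ¬ NullMeasurableSet V (volume : Measure ℝ))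
    (hVinner : ∀ s : Set ℝ, MeasurableSet s → s ⊆ V → volume s = 0) :
    ¬ AEMeasurable
      (Set.indicator (V ∪ I) (fun x => ∑ i, l i * Real.exp (b i * x)))
      (volume : Measure ℝ) :=
  stmt_6_general n hn l hl b hbinj I hI V hVI hVnm
end

section
/- Assume non(𝒩) = 𝔠, where 𝒩 is the ideal of Lebesgue null subsets of [0,1]. Let {x_β : β < 𝔠} enumerate [0,½] without repetition and let 𝔉 ⊆ (½,1] be a measure-zero Cantor set. Fix a nonempty Lebesgue null set V ⊆ 𝔉 and define, for β < 𝔠, f_β = χ_{V ∪ {x_γ : γ ≤ β}}. Then (f_β)_{β<𝔠} is a 𝔠-sequence of measurable functions on [0,1] such that 0 ≤ f_ξ ≤ f_β a.e. whenever ξ ≤ β, the sequence converges pointwise everywhere to the integrable function χ_{V ∪ [0,½]}, but lim_{β<𝔠} ∫_{[0,1]} f_β dλ = 0 ≠ ½ = ∫_{[0,1]} χ_{V ∪ [0,½]} dλ; that is, the Monotone Convergence Theorem fails for this 𝔠-sequence. -/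
/-!
Each `f_β` is the indicator of `V ∪ {x_γ : γ ≤ β}`, the null set `V` together with a set of
cardinality `< 𝔠`; under `non(𝒩) = 𝔠` it is null, so `f_β = 0` a.e. and every integral
vanishes. Yet every point of `[0,½]` is eventually some `x_γ`, so the `f_β` converge everywhere
to the indicator of `V ∪ [0,½]`, whose integral over `[0,1]` is `½`.
-/

open MeasureTheory Cardinal Ordinal

/-- `non(𝒩)`: the least cardinality of a non-null subset of `[0,1]`. -/
noncomputable def nonNull : Cardinal :=
  sInf {c : Cardinal | ∃ S : Set ℝ, S ⊆ Set.Icc 0 1 ∧ volume S ≠ 0 ∧ #S = c}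

theorem volume_eq_zero_of_mk_lt_continuum (hnon : nonNull = Cardinal.continuum)
    {S : Set ℝ} (hS : S ⊆ Set.Icc 0 1) (hc : #S < Cardinal.continuum) : volume S = 0 := by
  by_contra h
  exact (hnon ▸ csInf_le' ⟨S, hS, h, rfl⟩ : Cardinal.continuum ≤ #S).not_gt hc

universe u v

theorem mk_Iic_lt_continuum {β : Ordinal.{u}} (hβ : β < Cardinal.continuum.ord) :
    #(Set.Iic β) < Cardinal.continuum := by
  rw [← Order.Iio_succ, Cardinal.mk_Iio_ordinal, lift_lt_continuum, ← lt_ord]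
  exact (isSuccLimit_ord aleph0_le_continuum).succ_lt hβ

theorem mk_image_Iic_lt_continuum {α : Type v} (x : Ordinal.{u} → α) {β : Ordinal.{u}}
    (hβ : β < Cardinal.continuum.ord) : #(x '' Set.Iic β) < Cardinal.continuum :=
  lift_lt_continuum.mp <| mk_image_le_lift.trans_lt <| lift_lt_continuum.mpr <|
    mk_Iic_lt_continuum hβ

theorem volume_image_Iic_eq_zero (hnon : nonNull = Cardinal.continuum)
    {x : Ordinal.{u} → ℝ} {β : Ordinal.{u}} (hβ : β < Cardinal.continuum.ord)
    (hx : ∀ γ ≤ β, x γ ∈ Set.Icc 0 1) :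
    volume (x '' Set.Iic β) = 0 :=
  volume_eq_zero_of_mk_lt_continuum hnon (Set.image_subset_iff.mpr hx)
    (mk_image_Iic_lt_continuum x hβ)

theorem exists_forall_mem_image_Iic_iff {α : Type v} {x : Ordinal.{u} → α}
    {o : Ordinal.{u}} {A : Set α} (ho : 0 < o) (hmem : ∀ γ < o, x γ ∈ A)
    (hsurj : ∀ a ∈ A, ∃ γ < o, x γ = a) (t : α) :
    ∃ β₀ < o, ∀ β, β₀ ≤ β → β < o → (t ∈ x '' Set.Iic β ↔ t ∈ A) := by
  by_cases ht : t ∈ A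
  · obtain ⟨γ, hγ, rfl⟩ := hsurj t ht
    exact ⟨γ, hγ, fun β hγβ _ => iff_of_true ⟨γ, hγβ, rfl⟩ ht⟩
  · refine ⟨0, ho, fun β _ hβ => iff_of_false ?_ ht⟩
    rintro ⟨γ, hγβ, rfl⟩
    exact ht (hmem γ (hγβ.trans_lt hβ))

theorem stmt_9_general (hnon : nonNull = Cardinal.continuum)
    (x : Ordinal → ℝ)
    (hmem : ∀ α < Cardinal.continuum.ord, x α ∈ Set.Icc (0:ℝ) (1/2))
    (hsurj : ∀ y ∈ Set.Icc (0:ℝ) (1/2), ∃ α < Cardinal.continuum.ord, x α = y)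
    (V : Set ℝ) (hV0 : volume V = 0) :
    (∀ β < Cardinal.continuum.ord,
      AEMeasurable
        (Set.indicator (V ∪ x '' {γ | γ ≤ β}) (fun _ => (1:ℝ)))
        (volume : Measure ℝ)) ∧
    (∀ ξ β, ξ ≤ β → β < Cardinal.continuum.ord →
      ∀ᵐ t ∂(volume : Measure ℝ),
        0 ≤ Set.indicator (V ∪ x '' {γ | γ ≤ ξ}) (fun _ => (1:ℝ)) t ∧
        Set.indicator (V ∪ x '' {γ | γ ≤ ξ}) (fun _ => (1:ℝ)) t ≤
          Set.indicator (V ∪ x '' {γ | γ ≤ β}) (fun _ => (1:ℝ)) t) ∧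
    (∀ t ∈ Set.Icc (0:ℝ) 1, ∀ ε > (0:ℝ), ∃ β₀ < Cardinal.continuum.ord,
      ∀ β, β₀ < β → β < Cardinal.continuum.ord →
        |Set.indicator (V ∪ x '' {γ | γ ≤ β}) (fun _ => (1:ℝ)) t -
          Set.indicator (V ∪ Set.Icc (0:ℝ) (1/2)) (fun _ => (1:ℝ)) t| < ε) ∧
    IntegrableOn (Set.indicator (V ∪ Set.Icc (0:ℝ) (1/2)) (fun _ => (1:ℝ)))
      (Set.Icc (0:ℝ) 1) volume ∧
    (∀ β < Cardinal.continuum.ord,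
      ∫ t in Set.Icc (0:ℝ) 1,
        Set.indicator (V ∪ x '' {γ | γ ≤ β}) (fun _ => (1:ℝ)) t = 0) ∧
    (∫ t in Set.Icc (0:ℝ) 1,
        Set.indicator (V ∪ Set.Icc (0:ℝ) (1/2)) (fun _ => (1:ℝ)) t = 1/2) := by
  have hnull : ∀ β < Cardinal.continuum.ord,
      (V ∪ x '' {γ | γ ≤ β}).indicator (fun _ => (1:ℝ)) =ᵐ[volume] 0 := by
    intro β hβ
    have h0 := measure_union_null hV0 <| volume_image_Iic_eq_zero hnon hβ fun γ hγ =>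
      Set.Icc_subset_Icc_right (by norm_num) (hmem γ (hγ.trans_lt hβ))
    exact (indicator_ae_eq_of_ae_eq_set (ae_eq_empty.mpr h0)).trans
      (.of_eq (Set.indicator_empty _))
  have hlimit : (V ∪ Set.Icc (0:ℝ) (1/2)).indicator (fun _ => (1:ℝ)) =ᵐ[volume]
      (Set.Icc (0:ℝ) (1/2)).indicator 1 :=
    indicator_ae_eq_of_ae_eq_set (union_ae_eq_right_of_ae_eq_empty (ae_eq_empty.mpr hV0))
  refine ⟨fun β hβ => aemeasurable_const.congr (hnull β hβ).symm, ?_, ?_, ?_, ?_, ?_⟩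
  · intro ξ β hξβ _
    refine .of_forall fun t => ⟨Set.indicator_nonneg (fun _ _ => zero_le_one) t,
      Set.indicator_le_indicator_of_subset ?_ (fun _ => zero_le_one) t⟩
    exact Set.union_subset_union_right _ (Set.image_mono fun γ hγ => le_trans hγ hξβ)
  · intro t _ ε hε
    obtain ⟨β₀, hβ₀, heq⟩ := exists_forall_mem_image_Iic_iff
      (isSuccLimit_ord aleph0_le_continuum).bot_lt hmem hsurj t
    refine ⟨β₀, hβ₀, fun β hβ₀β hβ => ?_⟩
    have hiff : t ∈ V ∪ x '' {γ | γ ≤ β} ↔ t ∈ V ∪ Set.Icc 0 (1/2) :=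
      or_congr_right (heq β hβ₀β.le hβ)
    simpa [Set.indicator_eq_indicator hiff rfl] using hε
  · exact (integrable_congr (ae_restrict_of_ae hlimit)).mpr
      ((integrable_const 1).indicator measurableSet_Icc)
  · exact fun β hβ =>
      (integral_congr_ae (ae_restrict_of_ae (hnull β hβ))).trans (integral_zero' _ _)
  · rw [integral_congr_ae (ae_restrict_of_ae hlimit), integral_indicator_one measurableSet_Icc,
      measureReal_restrict_apply measurableSet_Icc,
      Set.inter_eq_left.mpr (Set.Icc_subset_Icc_right (by norm_num)), Real.volume_real_Icc]
    norm_num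

/-- Assuming `non(𝒩) = 𝔠`: for an enumeration `{x_β : β < 𝔠}` of `[0,½]` and a nonempty
null set `V` inside a measure-zero Cantor set `𝔉 ⊆ (½,1]`, the `𝔠`-sequence
`f_β = χ_{V ∪ {x_γ : γ ≤ β}}` is a monotone sequence of measurable functions converging
pointwise everywhere on `[0,1]` to the integrable function `χ_{V ∪ [0,½]}`, yet all its
integrals are `0` while the limit function has integral `½`: the Monotone Convergence
Theorem fails for this `𝔠`-sequence. -/
theorem stmt_9 (hnon : nonNull = Cardinal.continuum)
    (x : Ordinal → ℝ)
    (hmem : ∀ α < Cardinal.continuum.ord, x α ∈ Set.Icc (0:ℝ) (1/2))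
    (hinj : ∀ α β, α < Cardinal.continuum.ord → β < Cardinal.continuum.ord →
      x α = x β → α = β)
    (hsurj : ∀ y ∈ Set.Icc (0:ℝ) (1/2), ∃ α < Cardinal.continuum.ord, x α = y)
    (𝔉 : Set ℝ) (h𝔉 : 𝔉 ⊆ Set.Ioc (1/2 : ℝ) 1) (h𝔉c : IsCompact 𝔉)
    (h𝔉p : Perfect 𝔉) (h𝔉0 : volume 𝔉 = 0)
    (V : Set ℝ) (hV𝔉 : V ⊆ 𝔉) (hVne : V.Nonempty) (hV0 : volume V = 0) :
    (∀ β < Cardinal.continuum.ord,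
      AEMeasurable
        (Set.indicator (V ∪ x '' {γ | γ ≤ β}) (fun _ => (1:ℝ)))
        (volume : Measure ℝ)) ∧
    (∀ ξ β, ξ ≤ β → β < Cardinal.continuum.ord →
      ∀ᵐ t ∂(volume : Measure ℝ),
        0 ≤ Set.indicator (V ∪ x '' {γ | γ ≤ ξ}) (fun _ => (1:ℝ)) t ∧
        Set.indicator (V ∪ x '' {γ | γ ≤ ξ}) (fun _ => (1:ℝ)) t ≤
          Set.indicator (V ∪ x '' {γ | γ ≤ β}) (fun _ => (1:ℝ)) t) ∧
    (∀ t ∈ Set.Icc (0:ℝ) 1, ∀ ε > (0:ℝ), ∃ β₀ < Cardinal.continuum.ord,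
      ∀ β, β₀ < β → β < Cardinal.continuum.ord →
        |Set.indicator (V ∪ x '' {γ | γ ≤ β}) (fun _ => (1:ℝ)) t -
          Set.indicator (V ∪ Set.Icc (0:ℝ) (1/2)) (fun _ => (1:ℝ)) t| < ε) ∧
    IntegrableOn (Set.indicator (V ∪ Set.Icc (0:ℝ) (1/2)) (fun _ => (1:ℝ)))
      (Set.Icc (0:ℝ) 1) volume ∧
    (∀ β < Cardinal.continuum.ord,
      ∫ t in Set.Icc (0:ℝ) 1,
        Set.indicator (V ∪ x '' {γ | γ ≤ β}) (fun _ => (1:ℝ)) t = 0) ∧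
    (∫ t in Set.Icc (0:ℝ) 1,
        Set.indicator (V ∪ Set.Icc (0:ℝ) (1/2)) (fun _ => (1:ℝ)) t = 1/2) :=
  stmt_9_general hnon x hmem hsurj V hV0
end

section
/- Let ℋ be a Hamel basis of ℝ over ℚ, let I, J ⊆ ℝ be nondegenerate intervals such that J∖I has nonempty interior, and for each h ∈ ℋ let f_h(x) = e^{hx}. If a finite algebraic combination F = Σᵢ λᵢ Πⱼ f_{h_j}^{k_{j,i}} (with distinct h₁,…,h_m ∈ ℋ, distinct nonzero exponent tuples, and the convention that F is multiplied by χ_{σ∪I} for some fixed set σ ⊆ J∖I) vanishes identically on I, then λᵢ = 0 for all i. In particular, the functions {f_h · χ_{σ∪I} : h ∈ ℋ} are algebraically independent, giving 𝔠-many algebraically independent generators. -/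
/-!
On `I` the indicator is `1`, so the combination is the exponential sum `∑ᵢ λᵢ exp (βᵢ x)` with
`βᵢ = ∑ⱼ kᵢⱼ hⱼ`; the `βᵢ` are distinct because the `hⱼ` are `ℚ`-linearly independent. An
exponential sum is analytic, so vanishing on the nondegenerate interval `I` forces it to vanish on
all of `ℝ`, and the `x ↦ exp (βᵢ x)` are distinct characters of `(ℝ, +)`, hence linearly
independent (Dedekind–Artin). The cardinality of a Hamel basis is `dim_ℚ ℝ = 𝔠`.
-/

open Cardinal Function Set

theorem AnalyticOnNhd.eq_zero_of_eqOn_zero {𝕜 E F : Type*} [NontriviallyNormedField 𝕜]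
    [NormedAddCommGroup E] [NormedSpace 𝕜 E] [PreconnectedSpace E]
    [NormedAddCommGroup F] [NormedSpace 𝕜 F] {f : E → F} {s : Set E}
    (hf : AnalyticOnNhd 𝕜 f univ) (hs : (interior s).Nonempty) (hfs : EqOn f 0 s) : f = 0 := by
  obtain ⟨z₀, hz₀⟩ := hs
  exact hf.eq_of_eventuallyEq analyticOnNhd_const
    (Filter.mem_of_superset (mem_interior_iff_mem_nhds.mp hz₀) hfs)

theorem Real.linearIndependent_exp_mul {ι : Type*} {β : ι → ℝ} (hβ : Injective β) :
    LinearIndependent ℝ fun i (x : ℝ) => Real.exp (β i * x) := by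
  let χ : ℝ → Multiplicative ℝ →* ℝ := fun b =>
    Real.expMonoidHom.comp (AddMonoidHom.toMultiplicative (AddMonoidHom.mulLeft b))
  have hχ : Injective χ := fun b b' hbb' => by
    simpa [χ] using DFunLike.congr_fun hbb' (Multiplicative.ofAdd 1)
  exact (linearIndependent_monoidHom (Multiplicative ℝ) ℝ).comp (χ ∘ β) (hχ.comp hβ)

theorem Real.exp_sum_nsmul_mul {ι : Type*} (s : Finset ι) (k : ι → ℕ) (b : ι → ℝ) (x : ℝ) :
    Real.exp ((∑ j ∈ s, k j • b j) * x) = ∏ j ∈ s, Real.exp (b j * x) ^ k j := by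
  simp only [Finset.sum_mul, Real.exp_sum, ← Real.exp_nat_mul, nsmul_eq_mul, mul_assoc]

theorem Set.OrdConnected.interior_nonempty {α : Type*} [LinearOrder α] [DenselyOrdered α]
    [TopologicalSpace α] [OrderTopology α] {s : Set α} (hs : s.OrdConnected) {p q : α}
    (hp : p ∈ s) (hq : q ∈ s) (hpq : p < q) : (interior s).Nonempty :=
  (nonempty_Ioo.mpr hpq).mono <|
    interior_maximal (Ioo_subset_Icc_self.trans (hs.out hp hq)) isOpen_Ioo

theorem stmt_17_general {ι : Type} (B : Module.Basis ι ℚ ℝ)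
    (I : Set ℝ) (hI : I.OrdConnected) (hInd : ∃ p ∈ I, ∃ q ∈ I, p < q)
    (σ : Set ℝ)
    (m n : ℕ) (e : Fin m → ι) (he : Function.Injective e)
    (k : Fin n → Fin m → ℕ)
    (hkdist : Function.Injective k)
    (l : Fin n → ℝ)
    (h : ∀ x ∈ I,
      ∑ i, l i * ∏ j,
        (Set.indicator (σ ∪ I) (fun y => Real.exp (B (e j) * y)) x) ^ (k i j) = 0) :
    (∀ i, l i = 0) ∧ #ι = Cardinal.continuum := by
  refine ⟨?_, by rw [B.mk_eq_rank'', Real.rank_rat_real]⟩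
  set β : Fin n → ℝ := fun i => ∑ j, k i j • B (e j)
  have hβ : Injective β :=
    (((B.linearIndependent.comp e he).restrict_scalars' ℕ).fintypeLinearCombination_injective).comp
      hkdist
  have hvanish : EqOn (fun x => ∑ i, l i * Real.exp (β i * x)) 0 I := fun x hx => by
    simpa only [β, Real.exp_sum_nsmul_mul, indicator_of_mem (mem_union_right σ hx),
      Pi.zero_apply] using h x hx
  obtain ⟨p, hp, q, hq, hpq⟩ := hInd
  have hzero := AnalyticOnNhd.eq_zero_of_eqOn_zero (𝕜 := ℝ)
    (fun x _ => by fun_prop) (hI.interior_nonempty hp hq hpq) hvanish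
  exact Fintype.linearIndependent_iff.mp (Real.linearIndependent_exp_mul hβ) l <| funext fun x => by
    simpa using congrFun hzero x

/-- For a Hamel basis `ℋ` of `ℝ` over `ℚ`, intervals `I, J` with `J ∖ I` having nonempty
interior, and `σ ⊆ J ∖ I`: if a finite algebraic combination of the functions
`f_h · χ_{σ ∪ I}` (with `f_h(x) = e^{hx}`, distinct basis elements `h_j`, distinct
nonzero exponent tuples) vanishes on `I`, then all coefficients vanish; the family
`{f_h · χ_{σ∪I} : h ∈ ℋ}` is algebraically independent, and `card(ℋ) = 𝔠`. -/
theorem stmt_17 {ι : Type} (B : Module.Basis ι ℚ ℝ)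
    (I J : Set ℝ) (hI : I.OrdConnected) (hInd : ∃ p ∈ I, ∃ q ∈ I, p < q)
    (hJ : J.OrdConnected) (hJnd : ∃ p ∈ J, ∃ q ∈ J, p < q)
    (hint : (interior (J \ I)).Nonempty)
    (σ : Set ℝ) (hσ : σ ⊆ J \ I)
    (m n : ℕ) (e : Fin m → ι) (he : Function.Injective e)
    (k : Fin n → Fin m → ℕ) (hk1 : ∀ i, 1 ≤ ∑ j, k i j)
    (hkdist : Function.Injective k)
    (l : Fin n → ℝ)
    (h : ∀ x ∈ I,
      ∑ i, l i * ∏ j,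
        (Set.indicator (σ ∪ I) (fun y => Real.exp (B (e j) * y)) x) ^ (k i j) = 0) :
    (∀ i, l i = 0) ∧ #ι = Cardinal.continuum :=
  stmt_17_general B I hI hInd σ m n e he k hkdist l h
end
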